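/- arXiv:1102.0033 — 6 statements merged into one kernel-verified Lean document; each statement's English description precedes it below -/
import Mathlib

section
/- Let e₁, e₂, e₃ ∈ ℝ² satisfy e₁ + e₂ + e₃ = 0, and let R(e) = Λ(e)ᵀ Ĥ be the rigidity matrix of the triangle. Then R(e) has rank 3 if and only if e₁ and e₂ are linearly independent (i.e., the triangle is non-collinear). -/
open Matrix

noncomputable section

/-- The plane `ℝ²` with the Euclidean norm. -/
abbrev E2 := EuclideanSpace ℝ (Fin 2)

/-- Oriented incidence matrix of the triangle graph. -/
def Hmat : Matrix (Fin 3) (Fin 3) ℝ := !![-1, 1, 0; 0, -1, 1; 1, 0, -1]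

/-- Expanded incidence matrix `Ĥ = H ⊗ I₂`. -/
def Hhat : Matrix (Fin 3 × Fin 2) (Fin 3 × Fin 2) ℝ :=
  Matrix.kroneckerMap (· * ·) Hmat (1 : Matrix (Fin 2) (Fin 2) ℝ)

/-- `Λ(e) ∈ ℝ^{6×3}`: block-diagonal matrix with `2×1` blocks `e₁, e₂, e₃`. -/
def Lam (e : Fin 3 → E2) : Matrix (Fin 3 × Fin 2) (Fin 3) ℝ :=
  fun p j => if p.1 = j then e j p.2 else 0

/-- The rigidity matrix `R(e) = Λ(e)ᵀ Ĥ ∈ ℝ^{3×6}`. -/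
def Rmat (e : Fin 3 → E2) : Matrix (Fin 3) (Fin 3 × Fin 2) ℝ := (Lam e)ᵀ * Hhat

/-- The rigidity function `r(e)ᵢ = ½‖eᵢ‖²`. -/
def rvec (e : Fin 3 → E2) : Fin 3 → ℝ := fun i => (1 / 2) * ‖e i‖ ^ 2

/-- The matrix `D` built from the desired shape `S̄ = (s̄₁, s̄₂, s̄₃)`. -/
def Dmat (sb : Fin 3 → ℝ) : Matrix (Fin 3) (Fin 3) ℝ :=
  !![4 * sb 0 + sb 1 + sb 2, sb 1 - sb 2, sb 2 - sb 1;
     sb 0 - sb 2, sb 0 + 4 * sb 1 + sb 2, sb 2 - sb 0;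
     sb 0 - sb 1, sb 1 - sb 0, sb 0 + sb 1 + 4 * sb 2]

/-- `s_N(e) = r(e)ᵀ D r(e)`. -/
def sN (sb : Fin 3 → ℝ) (e : Fin 3 → E2) : ℝ := rvec e ⬝ᵥ (Dmat sb *ᵥ rvec e)

/-- `s_D(e) = S̄ᵀ D r(e)`. -/
def sD (sb : Fin 3 → ℝ) (e : Fin 3 → E2) : ℝ := sb ⬝ᵥ (Dmat sb *ᵥ rvec e)

/-- The time-varying scale function `s̃*(e) = s_N(e)/s_D(e)`. -/
def stilde (sb : Fin 3 → ℝ) (e : Fin 3 → E2) : ℝ := sN sb e / sD sb e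

/-- The instantaneous cost `‖R(e)ᵀ (r(e) − θ S̄)‖²` at scale `θ`. -/
def cost (sb : Fin 3 → ℝ) (e : Fin 3 → E2) (θ : ℝ) : ℝ :=
  ((Rmat e)ᵀ *ᵥ (rvec e - θ • sb)) ⬝ᵥ ((Rmat e)ᵀ *ᵥ (rvec e - θ • sb))

/-- The control gain `M(e) = s_D² I₃ − s_D S̄ r(e)ᵀ (Dᵀ + D) + s_N S̄ S̄ᵀ D`. -/
def Mmat (sb : Fin 3 → ℝ) (e : Fin 3 → E2) : Matrix (Fin 3) (Fin 3) ℝ :=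
  (sD sb e) ^ 2 • (1 : Matrix (Fin 3) (Fin 3) ℝ)
    - (sD sb e) • (vecMulVec sb (rvec e) * ((Dmat sb)ᵀ + Dmat sb))
    + (sN sb e) • (vecMulVec sb sb * Dmat sb)

/-- `N(e) = (1/s_D²)(s_D Λ(e)(Dᵀ + D) r(e) − s_N Λ(e) Dᵀ S̄) ∈ ℝ⁶`,
the gradient of the scale function `s̃*`. -/
def Nvec (sb : Fin 3 → ℝ) (e : Fin 3 → E2) : Fin 3 × Fin 2 → ℝ :=
  (1 / (sD sb e) ^ 2) •
    ((sD sb e) • (Lam e *ᵥ (((Dmat sb)ᵀ + Dmat sb) *ᵥ rvec e))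
      - (sN sb e) • (Lam e *ᵥ ((Dmat sb)ᵀ *ᵥ sb)))

end

/-! The three rows of `R(e)` are independent exactly when the only solution of
`g₀ e₀ = g₁ e₁ = g₂ e₂` is `g = 0`: the `k`-th pair of columns of `∑ gⱼ Rⱼ` is the combination of
the edges at vertex `k`. For a closed triangle this system is trivial precisely when `e₀, e₁` are
independent. -/

theorem Matrix.rank_eq_card_iff_linearIndependent_row {K m n : Type*} [Field K] [Fintype m]
    [Fintype n] (A : Matrix m n K) : A.rank = Fintype.card m ↔ LinearIndependent K A.row := by
  rw [rank_eq_finrank_span_row, linearIndependent_iff_card_eq_finrank_span, Set.finrank, eq_comm]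

theorem linearIndependent_pair_iff_of_add_add_eq_zero {K V : Type*} [Field K] [AddCommGroup V]
    [Module K V] {u v w : V} (huvw : u + v + w = 0) :
    LinearIndependent K ![u, v] ↔
      ∀ a b c : K, a • u = b • v → b • v = c • w → a = 0 ∧ b = 0 ∧ c = 0 := by
  obtain rfl : w = -u - v := by linear_combination (norm := module) huvw
  rw [LinearIndependent.pair_iff]
  constructor
  · intro hind a b c hab hbc
    obtain ⟨rfl, hb⟩ := hind a (-b) (by linear_combination (norm := module) hab)
    obtain rfl := neg_eq_zero.mp hb
    have huv : -u - v ≠ 0 := fun h ↦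
      neg_ne_zero.mpr one_ne_zero (hind (-1) (-1) (by linear_combination (norm := module) h)).1
    exact ⟨rfl, rfl, (smul_eq_zero.mp (hbc.symm.trans (zero_smul K v))).resolve_right huv⟩
  · intro H s t hst
    -- `(s (s - t), t (t - s), s t)` solves `a • u = b • v = c • w` whenever `s • u + t • v = 0`
    obtain ⟨ha, hb, hc⟩ := H (s * (s - t)) (t * (t - s)) (s * t)
      (by linear_combination (norm := module) (s - t) • hst)
      (by linear_combination (norm := module) t • hst)
    exact ⟨pow_eq_zero_iff two_ne_zero |>.mp (by linear_combination ha + hc),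
      pow_eq_zero_iff two_ne_zero |>.mp (by linear_combination hb + hc)⟩

theorem Rmat_apply (e : Fin 3 → E2) (j k : Fin 3) (i : Fin 2) :
    Rmat e j (k, i) = Hmat j k * e j i := by
  simp [Rmat, Matrix.mul_apply, Hhat, Lam, Matrix.one_apply, Fintype.sum_prod_type, mul_comm]

theorem sum_smul_row_Rmat_eq_zero_iff (e : Fin 3 → E2) (g : Fin 3 → ℝ) :
    ∑ j, g j • (Rmat e).row j = 0 ↔ g 0 • e 0 = g 1 • e 1 ∧ g 1 • e 1 = g 2 • e 2 := by
  have hblock (k : Fin 3) (i : Fin 2) :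
      (∑ j, g j • (Rmat e).row j) (k, i) = (∑ j, (g j * Hmat j k) • e j) i := by
    simp [Rmat_apply, mul_assoc]
  have hblocks : ∑ j, g j • (Rmat e).row j = 0 ↔ ∀ k, ∑ j, (g j * Hmat j k) • e j = 0 := by
    constructor
    · intro h k
      ext i
      rw [← hblock, h, Pi.zero_apply, PiLp.zero_apply]
    · intro h
      ext ⟨k, i⟩
      rw [hblock, h, Pi.zero_apply, PiLp.zero_apply]
  simp only [hblocks]
  simpa [Fin.forall_fin_succ, Fin.sum_univ_three, Hmat, neg_add_eq_zero, add_neg_eq_zero] using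
    fun (h01 : g 0 • e 0 = g 1 • e 1) h12 ↦ h01.trans h12

/-- For a closed triangle `e₁ + e₂ + e₃ = 0`, the rigidity matrix
`R(e)` has rank 3 if and only if `e₁` and `e₂` are linearly independent
(i.e., the triangle is non-collinear). -/
theorem rigidity_rank_eq_three_iff (e : Fin 3 → E2) (hsum : e 0 + e 1 + e 2 = 0) :
    (Rmat e).rank = 3 ↔ LinearIndependent ℝ ![e 0, e 1] := by
  have hrows := (Rmat e).rank_eq_card_iff_linearIndependent_row
  rw [Fintype.card_fin] at hrows
  rw [hrows, Fintype.linearIndependent_iff, linearIndependent_pair_iff_of_add_add_eq_zero hsum]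
  simp only [sum_smul_row_Rmat_eq_zero_iff]
  constructor
  · intro h a b c hab hbc
    have habc := h ![a, b, c] ⟨hab, hbc⟩
    exact ⟨habc 0, habc 1, habc 2⟩
  · rintro h g ⟨h01, h12⟩
    obtain ⟨h0, h1, h2⟩ := h _ _ _ h01 h12
    intro j
    fin_cases j <;> assumption
end

section
/- Let e₁, e₂, e₃ ∈ ℝ² satisfy e₁ + e₂ + e₃ = 0 with e₁ and e₂ linearly independent, and let S̄ = (s̄₁,s̄₂,s̄₃) ∈ ℝ³ with all s̄ᵢ > 0. Then s_D(e) = S̄ᵀ D r(e) = ‖R(e)ᵀ S̄‖² > 0. -/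
open Matrix

/-!
The blocks of `R(e)ᵀ S̄` are the differences `s̄₃e₃ - s̄₁e₁`, `s̄₁e₁ - s̄₂e₂`, `s̄₂e₂ - s̄₃e₃`.
Closing the triangle expresses every `eᵢ ⬝ eⱼ` through `r(e)`, which turns `R(e) R(e)ᵀ S̄` into
`D r(e)`; hence `s_D(e) = S̄ ⬝ R(e) R(e)ᵀ S̄ = ‖R(e)ᵀ S̄‖²`. This vanishes only if
`s̄₁e₁ = s̄₂e₂ = s̄₃e₃`, and for a non-collinear triangle that forces `S̄ = 0`.
-/

lemma transpose_Rmat_mulVec_apply (e : Fin 3 → E2) (s : Fin 3 → ℝ) (i : Fin 3) (k : Fin 2) :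
    ((Rmat e)ᵀ *ᵥ s) (i, k) = ∑ j, Hmat j i * (s j * e j k) := by
  simp only [mulVec, dotProduct, Rmat, Hhat, transpose_apply, Matrix.mul_apply, Lam,
    kroneckerMap_apply, one_apply, mul_ite, mul_one, mul_zero, ite_mul, zero_mul,
    Fintype.sum_prod_type, Finset.sum_ite_eq', Finset.mem_univ, ↓reduceIte]
  exact Finset.sum_congr rfl fun _ _ => by ring

lemma Rmat_mulVec_apply (e : Fin 3 → E2) (v : Fin 3 × Fin 2 → ℝ) (i : Fin 3) :
    (Rmat e *ᵥ v) i = ∑ k, e i k * ∑ j, Hmat i j * v (j, k) := by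
  simp only [mulVec, dotProduct, Rmat, Hhat, Matrix.mul_apply, transpose_apply, Lam,
    kroneckerMap_apply, one_apply, mul_ite, mul_one, mul_zero, ite_mul, zero_mul,
    Fintype.sum_prod_type, Finset.sum_ite_eq', Finset.mem_univ, ↓reduceIte, Fin.sum_univ_two,
    Finset.sum_add_distrib, Finset.mul_sum, mul_assoc]

lemma Dmat_mulVec_rvec {e : Fin 3 → E2} (hsum : e 0 + e 1 + e 2 = 0) (s : Fin 3 → ℝ) :
    Dmat s *ᵥ rvec e = (Rmat e * (Rmat e)ᵀ) *ᵥ s := by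
  have h2 : e 2 = -(e 0 + e 1) := eq_neg_of_add_eq_zero_right hsum
  ext i
  simp only [← mulVec_mulVec, Rmat_mulVec_apply, transpose_Rmat_mulVec_apply]
  fin_cases i <;>
    simp only [mulVec, dotProduct, Dmat, Hmat, rvec, of_apply, cons_val', cons_val_fin_one,
      cons_val, cons_val_zero, cons_val_one, Fin.sum_univ_two, Fin.sum_univ_three, Fin.isValue,
      Fin.zero_eta, Fin.mk_one, Fin.reduceFinMk, EuclideanSpace.norm_sq_eq, Real.norm_eq_abs,
      sq_abs, h2, PiLp.add_apply, PiLp.neg_apply] <;>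
    ring

lemma sD_eq_dotProduct_self {e : Fin 3 → E2} (hsum : e 0 + e 1 + e 2 = 0) (s : Fin 3 → ℝ) :
    sD s e = ((Rmat e)ᵀ *ᵥ s) ⬝ᵥ ((Rmat e)ᵀ *ᵥ s) := by
  rw [sD, Dmat_mulVec_rvec hsum, ← mulVec_mulVec, dotProduct_mulVec, mulVec_transpose]

lemma transpose_Rmat_mulVec_eq_zero_iff {e : Fin 3 → E2} (hsum : e 0 + e 1 + e 2 = 0)
    (hind : LinearIndependent ℝ ![e 0, e 1]) {s : Fin 3 → ℝ} :
    (Rmat e)ᵀ *ᵥ s = 0 ↔ s = 0 := by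
  refine ⟨fun h => ?_, fun h => h ▸ mulVec_zero _⟩
  have block (i : Fin 3) (k : Fin 2) : ∑ j, Hmat j i * (s j * e j k) = 0 := by
    rw [← transpose_Rmat_mulVec_apply, h, Pi.zero_apply]
  have h01 : s 0 • e 0 + (-s 1) • e 1 = 0 := by
    ext k
    simpa [Fin.sum_univ_three, Hmat, sub_eq_add_neg] using block 1 k
  obtain ⟨hs0, hs1⟩ := LinearIndependent.pair_iff.mp hind _ _ h01
  have he2 : e 2 ≠ 0 := by
    intro he2
    rw [he2, add_zero] at hsum
    exact one_ne_zero (LinearIndependent.pair_iff.mp hind 1 1 (by simpa using hsum)).1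
  have h2 : s 2 • e 2 = 0 := by
    ext k
    simpa [Fin.sum_univ_three, Hmat, hs0] using block 0 k
  have hs2 := (smul_eq_zero.mp h2).resolve_right he2
  ext j
  fin_cases j <;> simp [hs0, hs2, neg_eq_zero.mp hs1]

/-- For a non-collinear closed triangle and a shape `S̄` with
positive entries, `s_D(e) = S̄ᵀ D r(e) = ‖R(e)ᵀ S̄‖² > 0`. -/
theorem sD_eq_norm_sq_and_pos (e : Fin 3 → E2) (hsum : e 0 + e 1 + e 2 = 0)
    (hind : LinearIndependent ℝ ![e 0, e 1])
    (sb : Fin 3 → ℝ) (hsb : ∀ i, 0 < sb i) :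
    sD sb e = ((Rmat e)ᵀ *ᵥ sb) ⬝ᵥ ((Rmat e)ᵀ *ᵥ sb) ∧ 0 < sD sb e := by
  have hR : (Rmat e)ᵀ *ᵥ sb ≠ 0 := by
    rw [Ne, transpose_Rmat_mulVec_eq_zero_iff hsum hind]
    exact fun h => (hsb 0).ne' (congrFun h 0)
  rw [sD_eq_dotProduct_self hsum]
  exact ⟨rfl, lt_of_le_of_ne' (Fintype.sum_nonneg fun _ => mul_self_nonneg _)
    (dotProduct_self_eq_zero.not.mpr hR)⟩
end

section
/- Let e = (e₁, e₂, e₃) ∈ (ℝ²)³ be arbitrary and let S̄ = (s̄₁,s̄₂,s̄₃) ∈ ℝ³. Suppose s_D(e) = S̄ᵀ D r(e) ≠ 0, and define N(e) = (1/s_D(e)²) · (s_D(e) Λ(e)(Dᵀ + D) r(e) − s_N(e) Λ(e) Dᵀ S̄) ∈ ℝ⁶ and the control gain M(e) = s_D(e)² I₃ − s_D(e) S̄ r(e)ᵀ (Dᵀ + D) + s_N(e) S̄ S̄ᵀ D ∈ ℝ^{3×3}. Then the matrix identity Λ(e) M(e)ᵀ = s_D(e)² · (Λ(e) − N(e) S̄ᵀ)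 holds in ℝ^{6×3}. -/
open Matrix

/-- Whenever `s_D(e) ≠ 0`, the matrix identity
`Λ(e) M(e)ᵀ = s_D(e)² (Λ(e) − N(e) S̄ᵀ)` holds in `ℝ^{6×3}`. -/
theorem Lam_mul_M_transpose_eq (sb : Fin 3 → ℝ) (e : Fin 3 → E2)
    (hD : sD sb e ≠ 0) :
    Lam e * (Mmat sb e)ᵀ =
      (sD sb e) ^ 2 • (Lam e - vecMulVec (Nvec sb e) sb) := by
  ext ⟨i, k⟩ j
  simp only [Mmat, Nvec, Lam, vecMulVec_apply, Matrix.mul_apply, Matrix.mulVec,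
    dotProduct, Fin.sum_univ_succ, Fin.sum_univ_zero, Matrix.sub_apply,
    Matrix.add_apply, Matrix.smul_apply, Matrix.one_apply, Matrix.transpose_apply,
    Pi.smul_apply, Pi.sub_apply, smul_eq_mul]
  fin_cases i <;> fin_cases j <;> simp <;> field_simp <;> ring
end

section
/- Let S̄ = (s̄₁,s̄₂,s̄₃) ∈ ℝ³ and let e = (e₁,e₂,e₃) ∈ (ℝ²)³ be such that s_D(e) = S̄ᵀ D r(e) ≠ 0. Then the 3×3 matrix M(e) = s_D(e)² I₃ − s_D(e) S̄ r(e)ᵀ (Dᵀ + D) + s_N(e) S̄ S̄ᵀ D is singular (has determinant zero) if and only if (S̄ᵀ D r(e)) · (r(e)ᵀ D S̄) = (r(e)ᵀ D r(e)) · (S̄ᵀ D S̄). -/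
open Matrix

private lemma det_rank_one (c : ℝ) (u v : Fin 3 → ℝ) :
    (c • (1 : Matrix (Fin 3) (Fin 3) ℝ) + vecMulVec u v).det
      = c ^ 2 * (c + u ⬝ᵥ v) := by
  simp only [Matrix.det_fin_three, Matrix.add_apply, Matrix.smul_apply,
    Matrix.one_apply, Matrix.vecMulVec_apply, dotProduct, Fin.sum_univ_three,
    smul_eq_mul, Fin.isValue, Fin.reduceEq, reduceIte, ite_true, ite_false]
  ring

private lemma key_det (D : Matrix (Fin 3) (Fin 3) ℝ) (sb a : Fin 3 → ℝ) :
    ((sb ⬝ᵥ (D *ᵥ a)) ^ 2 • (1 : Matrix (Fin 3) (Fin 3) ℝ)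
      - (sb ⬝ᵥ (D *ᵥ a)) • (vecMulVec sb a * (Dᵀ + D))
      + (a ⬝ᵥ (D *ᵥ a)) • (vecMulVec sb sb * D)).det
    = -(sb ⬝ᵥ (D *ᵥ a)) ^ 4 *
        ((sb ⬝ᵥ (D *ᵥ a)) * (a ⬝ᵥ (D *ᵥ sb))
          - (a ⬝ᵥ (D *ᵥ a)) * (sb ⬝ᵥ (D *ᵥ sb))) := by
  have hM : (sb ⬝ᵥ (D *ᵥ a)) ^ 2 • (1 : Matrix (Fin 3) (Fin 3) ℝ)
      - (sb ⬝ᵥ (D *ᵥ a)) • (vecMulVec sb a * (Dᵀ + D))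
      + (a ⬝ᵥ (D *ᵥ a)) • (vecMulVec sb sb * D)
      = (sb ⬝ᵥ (D *ᵥ a)) ^ 2 • (1 : Matrix (Fin 3) (Fin 3) ℝ)
        + vecMulVec sb ((a ⬝ᵥ (D *ᵥ a)) • (Dᵀ *ᵥ sb)
            - (sb ⬝ᵥ (D *ᵥ a)) • ((Dᵀ + D) *ᵥ a)) := by
    ext i j
    simp only [Matrix.add_apply, Matrix.sub_apply, Matrix.smul_apply,
      Matrix.vecMulVec_apply, Matrix.mul_apply, Matrix.mulVec, dotProduct,
      Fin.sum_univ_three, Pi.add_apply, Pi.sub_apply, Pi.smul_apply,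
      smul_eq_mul, Matrix.transpose_apply, Matrix.one_apply]
    by_cases h : i = j <;> simp [h] <;> ring
  rw [hM, det_rank_one]
  have h1 : sb ⬝ᵥ ((a ⬝ᵥ (D *ᵥ a)) • (Dᵀ *ᵥ sb)
        - (sb ⬝ᵥ (D *ᵥ a)) • ((Dᵀ + D) *ᵥ a))
      = (a ⬝ᵥ (D *ᵥ a)) * (sb ⬝ᵥ (D *ᵥ sb))
        - (sb ⬝ᵥ (D *ᵥ a)) * ((sb ⬝ᵥ (D *ᵥ a)) + (a ⬝ᵥ (D *ᵥ sb))) := by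
    simp only [dotProduct, Matrix.mulVec, Matrix.add_apply, Pi.sub_apply,
      Pi.smul_apply, smul_eq_mul, Matrix.transpose_apply, Fin.sum_univ_three]
    ring
  rw [h1]
  ring

/-- When `s_D(e) ≠ 0`, the gain matrix `M(e)` is singular
(has determinant zero) if and only if
`(S̄ᵀ D r(e))·(r(e)ᵀ D S̄) = (r(e)ᵀ D r(e))·(S̄ᵀ D S̄)`. -/
theorem M_singular_iff (sb : Fin 3 → ℝ) (e : Fin 3 → E2)
    (hD : sD sb e ≠ 0) :
    (Mmat sb e).det = 0 ↔
      (sb ⬝ᵥ (Dmat sb *ᵥ rvec e)) * (rvec e ⬝ᵥ (Dmat sb *ᵥ sb)) =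
        (rvec e ⬝ᵥ (Dmat sb *ᵥ rvec e)) * (sb ⬝ᵥ (Dmat sb *ᵥ sb)) := by
  have h := key_det (Dmat sb) sb (rvec e)
  have hM : (Mmat sb e).det = -(sD sb e) ^ 4 *
      ((sb ⬝ᵥ (Dmat sb *ᵥ rvec e)) * (rvec e ⬝ᵥ (Dmat sb *ᵥ sb))
        - (rvec e ⬝ᵥ (Dmat sb *ᵥ rvec e)) * (sb ⬝ᵥ (Dmat sb *ᵥ sb))) := by
    simpa [Mmat, sD, sN] using h
  rw [hM]
  constructor
  · intro h0
    rcases mul_eq_zero.mp h0 with h1 | h1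
    · exact absurd (pow_eq_zero_iff (Nat.succ_ne_zero 3) |>.mp (neg_eq_zero.mp h1)) hD
    · linarith [sub_eq_zero.mp h1]
  · intro h1
    have : (sb ⬝ᵥ (Dmat sb *ᵥ rvec e)) * (rvec e ⬝ᵥ (Dmat sb *ᵥ sb))
        - (rvec e ⬝ᵥ (Dmat sb *ᵥ rvec e)) * (sb ⬝ᵥ (Dmat sb *ᵥ sb)) = 0 := by linarith
    rw [this, mul_zero]
end

section
/- Let e₁, e₂, e₃ ∈ ℝ² satisfy e₁ + e₂ + e₃ = 0 with e₁ and e₂ linearly independent, and let S̄ = (s̄₁,s̄₂,s̄₃) ∈ ℝ³ with all s̄ᵢ > 0. Then the 3×3 matrix M(e) = s_D(e)² I₃ − s_D(e) S̄ r(e)ᵀ (Dᵀ + D) + s_N(e) S̄ S̄ᵀ D is singular if and only if there exists k ∈ ℝ such that r(e) = k S̄. -/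
open Matrix

/-!
Writing `a = s_D(e)`, `b = s_N(e)`, the gain matrix is the rank-one update
`a² I + S̄ wᵀ` with `w = b DᵀS̄ − a (D + Dᵀ) r`, so the matrix determinant lemma gives
`det M = a⁴ (b · S̄ᵀDS̄ − a · rᵀDS̄)`. For the specific `D` the bracket is the quadratic form
`2 (‖S̄‖² + (Σ s̄ᵢ)²) (Σ (S̄ × r)ᵢ)² + 12 (s̄₁s̄₂ + s̄₁s̄₃ + s̄₂s̄₃) ‖S̄ × r‖²`,
which for positive `S̄` vanishes exactly when `r ∥ S̄`. The factor `a⁴` never vanishes: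
`a = ‖R(e)ᵀS̄‖² = Σ ‖s̄ᵢeᵢ − s̄ⱼeⱼ‖²`, and `s̄₁e₁ ≠ s̄₂e₂` for a non-collinear triangle.
-/

section DeterminantLemma

variable {n K : Type*} [Fintype n] [DecidableEq n] [Nonempty n] [Field K]

theorem det_smul_one_add_vecMulVec {c : K} (hc : c ≠ 0) (u v : n → K) :
    (c • (1 : Matrix n n K) + vecMulVec u v).det = c ^ (Fintype.card n - 1) * (c + v ⬝ᵥ u) := by
  have hfactor : c • (1 : Matrix n n K) + vecMulVec u v = c • (1 + vecMulVec (c⁻¹ • u) v) := by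
    rw [smul_add, smul_vecMulVec, smul_inv_smul₀ hc]
  obtain ⟨k, hk⟩ := Nat.exists_eq_succ_of_ne_zero (Fintype.card_ne_zero (α := n))
  rw [hfactor, det_smul, vecMulVec_eq Unit, det_one_add_replicateCol_mul_replicateRow,
    dotProduct_smul, hk, Nat.succ_sub_one, pow_succ, smul_eq_mul]
  field_simp

theorem det_gain_matrix (D : Matrix n n K) (S r : n → K) {a : K} (b : K) (ha₀ : a ≠ 0)
    (ha : S ⬝ᵥ D *ᵥ r = a) :
    (a ^ 2 • (1 : Matrix n n K) - a • (vecMulVec S r * (Dᵀ + D)) + b • (vecMulVec S S * D)).det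
      = a ^ (2 * (Fintype.card n - 1)) * (b * (S ⬝ᵥ D *ᵥ S) - a * (r ⬝ᵥ D *ᵥ S)) := by
  have hrank_one : a ^ 2 • (1 : Matrix n n K) - a • (vecMulVec S r * (Dᵀ + D))
      + b • (vecMulVec S S * D)
      = a ^ 2 • 1 + vecMulVec S (b • (S ᵥ* D) - a • (r ᵥ* (Dᵀ + D))) := by
    rw [vecMulVec_mul, vecMulVec_mul, vecMulVec_sub, vecMulVec_smul, vecMulVec_smul]
    abel
  have hDr : r ᵥ* Dᵀ ⬝ᵥ S = a := by rw [vecMul_transpose, dotProduct_comm, ha]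
  rw [hrank_one, det_smul_one_add_vecMulVec (pow_ne_zero 2 ha₀), pow_mul, sub_dotProduct,
    smul_dotProduct, smul_dotProduct, vecMul_add, add_dotProduct, hDr, ← dotProduct_mulVec,
    ← dotProduct_mulVec]
  simp only [smul_eq_mul]
  ring

end DeterminantLemma

theorem det_Mmat (sb : Fin 3 → ℝ) (e : Fin 3 → E2) (h : sD sb e ≠ 0) :
    (Mmat sb e).det = sD sb e ^ 4 *
      (sN sb e * (sb ⬝ᵥ Dmat sb *ᵥ sb) - sD sb e * (rvec e ⬝ᵥ Dmat sb *ᵥ sb)) :=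
  det_gain_matrix (Dmat sb) sb (rvec e) (sN sb e) h rfl

theorem Dmat_form_identity (s r : Fin 3 → ℝ) :
    (r ⬝ᵥ Dmat s *ᵥ r) * (s ⬝ᵥ Dmat s *ᵥ s) - (s ⬝ᵥ Dmat s *ᵥ r) * (r ⬝ᵥ Dmat s *ᵥ s)
      = 2 * (s ⬝ᵥ s + (∑ i, s i) ^ 2) * ((1 : Fin 3 → ℝ) ⬝ᵥ s ⨯₃ r) ^ 2
        + 12 * (s 0 * s 1 + s 0 * s 2 + s 1 * s 2) * (s ⨯₃ r ⬝ᵥ s ⨯₃ r) := by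
  simp only [Dmat, cross_apply, dotProduct, mulVec, Fin.sum_univ_three, of_apply, cons_val',
    cons_val_zero, cons_val_one, cons_val, cons_val_fin_one, Pi.one_apply, one_mul]
  ring

theorem Dmat_form_eq_zero_iff {s : Fin 3 → ℝ} (hs : ∀ i, 0 < s i) (r : Fin 3 → ℝ) :
    (r ⬝ᵥ Dmat s *ᵥ r) * (s ⬝ᵥ Dmat s *ᵥ s) - (s ⬝ᵥ Dmat s *ᵥ r) * (r ⬝ᵥ Dmat s *ᵥ s) = 0
      ↔ ∃ k : ℝ, r = k • s := by
  have hs₀ : s ≠ 0 := fun h => (hs 0).ne' (congrFun h 0)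
  have hp : 0 < s 0 * s 1 + s 0 * s 2 + s 1 * s 2 := by
    have := hs 0; have := hs 1; have := hs 2; positivity
  rw [Dmat_form_identity]
  constructor
  · intro h
    have hsq (v : Fin 3 → ℝ) : 0 ≤ v ⬝ᵥ v := Finset.sum_nonneg fun i _ => mul_self_nonneg (v i)
    have hcross : s ⨯₃ r = 0 := by
      rw [← dotProduct_self_eq_zero]
      refine le_antisymm ?_ (hsq _)
      nlinarith [mul_nonneg (add_nonneg (hsq s) (sq_nonneg (∑ i, s i)))
        (sq_nonneg ((1 : Fin 3 → ℝ) ⬝ᵥ s ⨯₃ r))]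
    have hdep : ¬ LinearIndependent ℝ ![s, r] :=
      fun hli => crossProduct_ne_zero_iff_linearIndependent.mpr hli hcross
    simp only [LinearIndependent.pair_iff' hs₀, not_forall, not_not] at hdep
    obtain ⟨k, hk⟩ := hdep
    exact ⟨k, hk.symm⟩
  · rintro ⟨k, rfl⟩
    simp [cross_self]

theorem two_mul_inner_eq_of_add_add_eq_zero {V : Type*} [NormedAddCommGroup V]
    [InnerProductSpace ℝ V] {a b c : V} (h : a + b + c = 0) :
    2 * inner ℝ a b = ‖c‖ ^ 2 - ‖a‖ ^ 2 - ‖b‖ ^ 2 := by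
  rw [eq_neg_of_add_eq_zero_right h, norm_neg, norm_add_sq_real]
  ring

theorem sD_eq_sum_norm_sq (sb : Fin 3 → ℝ) {e : Fin 3 → E2} (hsum : e 0 + e 1 + e 2 = 0) :
    sD sb e = ‖sb 0 • e 0 - sb 1 • e 1‖ ^ 2 + ‖sb 1 • e 1 - sb 2 • e 2‖ ^ 2
      + ‖sb 2 • e 2 - sb 0 • e 0‖ ^ 2 := by
  have h01 := two_mul_inner_eq_of_add_add_eq_zero hsum
  have h12 := two_mul_inner_eq_of_add_add_eq_zero (a := e 1) (b := e 2) (c := e 0)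
    (by rw [← hsum]; abel)
  have h20 := two_mul_inner_eq_of_add_add_eq_zero (a := e 2) (b := e 0) (c := e 1)
    (by rw [← hsum]; abel)
  simp only [norm_sub_sq_real, norm_smul, mul_pow, Real.norm_eq_abs, sq_abs, real_inner_smul_left,
    real_inner_smul_right]
  simp only [sD, Dmat, rvec, dotProduct, mulVec, Fin.sum_univ_three, of_apply, cons_val',
    cons_val_zero, cons_val_one, cons_val, cons_val_fin_one]
  linear_combination (sb 0 * sb 1) * h01 + (sb 1 * sb 2) * h12 + (sb 2 * sb 0) * h20

theorem sD_pos (sb : Fin 3 → ℝ) (hsb : sb 0 ≠ 0) {e : Fin 3 → E2} (hsum : e 0 + e 1 + e 2 = 0)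
    (hind : LinearIndependent ℝ ![e 0, e 1]) : 0 < sD sb e := by
  have hne : sb 0 • e 0 - sb 1 • e 1 ≠ 0 := fun h => hsb <|
    (LinearIndependent.pair_iff.mp hind (sb 0) (-sb 1) (by rw [neg_smul, ← sub_eq_add_neg, h])).1
  rw [sD_eq_sum_norm_sq sb hsum]
  have := norm_pos_iff.mpr hne
  positivity

/-- For a non-collinear closed triangle and a shape `S̄` with
positive entries, the gain matrix `M(e)` is singular if and only if
`r(e) = k S̄` for some `k ∈ ℝ` (i.e. the triangle is similar to the shape). -/
theorem M_singular_iff_similar (e : Fin 3 → E2) (hsum : e 0 + e 1 + e 2 = 0)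
    (hind : LinearIndependent ℝ ![e 0, e 1])
    (sb : Fin 3 → ℝ) (hsb : ∀ i, 0 < sb i) :
    (Mmat sb e).det = 0 ↔ ∃ k : ℝ, rvec e = k • sb := by
  have hsD := (sD_pos sb (hsb 0).ne' hsum hind).ne'
  rw [det_Mmat sb e hsD, mul_eq_zero, or_iff_right (pow_ne_zero 4 hsD), sN, sD]
  exact Dmat_form_eq_zero_iff hsb (rvec e)
end

section
/- For all real numbers x and y, sin²x + sin²y + sin²(x + y) ≤ 9/4, and equality holds at x = y = 2π/3. Consequently, in bearing-only localization of a target by three sensors at common distance r from the target with measurement error variance σ², where the Fisher information determinant equals (1/(r⁴σ⁴))·(sin²θ₁₂ + sin²θ₁₃ + sin²θ₂₃) with θ₂₃ = 2π − θ₁₂ − θ₁₃, the determinant is at most 9/(4r⁴σ⁴), and this maximum is attained when θ₁₂ = θ₁₃ = θ₂₃ = 2π/3. -/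
/-! Completing the square, with `c = cos (x + y)` and `d = x - y`,
`sin² x + sin² y + sin² (x + y) = 2 - c² - c cos d = 9/4 - (c + cos d / 2)² - sin² d / 4`,
so the sum is at most `9/4`, with equality iff `sin d = 0` and `c = -cos d / 2`, e.g. at
`x = y = 2π/3`. Since `sin² (2π - a - b) = sin² (a + b)`, the Fisher determinant is this sum
scaled by `1 / (r⁴σ⁴)`. -/

open Real

theorem sin_sq_add_sin_sq_add_sin_sq_add_eq (x y : ℝ) :
    sin x ^ 2 + sin y ^ 2 + sin (x + y) ^ 2 =
      9 / 4 - (cos (x + y) + cos (x - y) / 2) ^ 2 - sin (x - y) ^ 2 / 4 := by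
  simp only [sin_add, cos_add, sin_sub, cos_sub]
  linear_combination (cos y ^ 2 + 5 / 4) * sin_sq_add_cos_sq x +
    (sin x ^ 2 / 4 + 5 / 4 * cos x ^ 2 + 1) * sin_sq_add_cos_sq y

theorem sin_sq_add_sin_sq_add_sin_sq_add_le (x y : ℝ) :
    sin x ^ 2 + sin y ^ 2 + sin (x + y) ^ 2 ≤ 9 / 4 := by
  rw [sin_sq_add_sin_sq_add_sin_sq_add_eq]
  linarith [sq_nonneg (cos (x + y) + cos (x - y) / 2), sq_nonneg (sin (x - y))]

theorem cos_four_pi_div_three : cos (4 * π / 3) = -1 / 2 := by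
  rw [show 4 * π / 3 = π / 3 + π by ring, cos_add_pi, cos_pi_div_three]; ring

theorem sin_sq_two_pi_div_three_add_eq :
    sin (2 * π / 3) ^ 2 + sin (2 * π / 3) ^ 2 + sin (2 * π / 3 + 2 * π / 3) ^ 2 = 9 / 4 := by
  rw [sin_sq_add_sin_sq_add_sin_sq_add_eq, sub_self,
    show 2 * π / 3 + 2 * π / 3 = 4 * π / 3 by ring, cos_four_pi_div_three, cos_zero, sin_zero]
  norm_num

theorem sin_two_pi_sub_sub_sq (a b : ℝ) : sin (2 * π - a - b) ^ 2 = sin (a + b) ^ 2 := by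
  rw [sub_sub, sin_two_pi_sub, neg_sq]

/-- `sin²x + sin²y + sin²(x+y) ≤ 9/4` for all reals, with equality
at `x = y = 2π/3`.  Consequently, in bearing-only localization of a target by
three sensors at common distance `r` with measurement error variance `σ²`,
where the Fisher information determinant is
`(1/(r⁴σ⁴))(sin²θ₁₂ + sin²θ₁₃ + sin²θ₂₃)` with `θ₂₃ = 2π − θ₁₂ − θ₁₃`,
the determinant is at most `9/(4r⁴σ⁴)`, attained when
`θ₁₂ = θ₁₃ = θ₂₃ = 2π/3`. -/
theorem fisher_determinant_bound :
    (∀ x y : ℝ, sin x ^ 2 + sin y ^ 2 + sin (x + y) ^ 2 ≤ 9 / 4) ∧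
    (sin (2 * π / 3) ^ 2 + sin (2 * π / 3) ^ 2 +
      sin (2 * π / 3 + 2 * π / 3) ^ 2 = 9 / 4) ∧
    (∀ r σ θ12 θ13 θ23 : ℝ, 0 < r → 0 < σ → θ23 = 2 * π - θ12 - θ13 →
      (1 / (r ^ 4 * σ ^ 4)) * (sin θ12 ^ 2 + sin θ13 ^ 2 + sin θ23 ^ 2) ≤
        9 / (4 * r ^ 4 * σ ^ 4)) ∧
    (∀ r σ θ12 θ13 θ23 : ℝ, 0 < r → 0 < σ →
      θ12 = 2 * π / 3 → θ13 = 2 * π / 3 → θ23 = 2 * π - θ12 - θ13 →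
      (1 / (r ^ 4 * σ ^ 4)) * (sin θ12 ^ 2 + sin θ13 ^ 2 + sin θ23 ^ 2) =
        9 / (4 * r ^ 4 * σ ^ 4)) := by
  refine ⟨sin_sq_add_sin_sq_add_sin_sq_add_le, sin_sq_two_pi_div_three_add_eq, ?_, ?_⟩
  · rintro r σ θ12 θ13 θ23 - - rfl
    calc 1 / (r ^ 4 * σ ^ 4) * (sin θ12 ^ 2 + sin θ13 ^ 2 + sin (2 * π - θ12 - θ13) ^ 2)
        ≤ 1 / (r ^ 4 * σ ^ 4) * (9 / 4) := by
          rw [sin_two_pi_sub_sub_sq]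
          gcongr
          exact sin_sq_add_sin_sq_add_sin_sq_add_le θ12 θ13
      _ = 9 / (4 * r ^ 4 * σ ^ 4) := by ring
  · rintro r σ _ _ _ - - rfl rfl rfl
    rw [sin_two_pi_sub_sub_sq, sin_sq_two_pi_div_three_add_eq]
    ring
end
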